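/- Let B be the 24×6 real matrix given explicitly in the paper's centred cube-interlocking example. Then for every x = (ω, t) ∈ ℝ⁶ with B·x ≥ 0 componentwise, x = 0. (The cube assembly with translations v₁ = (1,1,2), v₂ = (-1,2,1) is infinitesimally interlocked.) -/
import Mathlib


open Matrix

/-- The infinitesimal interlocking matrix of the centred interlocking cube assembly,
given in the paper by its transpose. -/
def cubeB : Matrix (Fin 24) (Fin 6) ℝ :=
  (!![1, 1, 0, 0, 0, 0, 1, 1, 0, 0, 0, 0, 0, 0, 0, 0, 0, 0, -1, -1, -1, -1, 0, 0;
      0, 0, 0, 0, 0, 0, 0, 0, -1, -1, 0, 0, 0, 0, -1, -1, 1, 0, 0, 1, 0, 1, 1, 0;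
      0, 1, 1, 0, 1, 0, 0, 1, -1, 0, 0, -1, 0, -1, -1, 0, 0, 0, 0, 0, 0, 0, 0, 0;
      0, 0, 0, 0, 0, 0, 0, 0, 1, 1, 1, 1, -1, -1, -1, -1, 0, 0, 0, 0, 0, 0, 0, 0;
      1, 1, 1, 1, -1, -1, -1, -1, 0, 0, 0, 0, 0, 0, 0, 0, 0, 0, 0, 0, 0, 0, 0, 0;
      0, 0, 0, 0, 0, 0, 0, 0, 0, 0, 0, 0, 0, 0, 0, 0, 1, 1, 1, 1, -1, -1, -1, -1] :
    Matrix (Fin 6) (Fin 24) ℝ)ᵀ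

/-- The centred cube assembly is infinitesimally interlocked: any `x = (ω,t) ∈ ℝ⁶`
with `B·x ≥ 0` componentwise is zero. -/
theorem cubeB_infinitesimally_interlocked (x : Fin 6 → ℝ)
    (h : ∀ i : Fin 24, 0 ≤ cubeB.mulVec x i) : x = 0 := by
  have key : ∀ i : Fin 24, (cubeB *ᵥ x) i = cubeB i 0 * x 0 + cubeB i 1 * x 1 + cubeB i 2 * x 2 +
      cubeB i 3 * x 3 + cubeB i 4 * x 4 + cubeB i 5 * x 5 := fun i => by
    simp [Matrix.mulVec, dotProduct, Fin.sum_univ_six]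
  have h0 := h 0
  rw [key] at h0
  norm_num [show cubeB 0 0 = (1:ℝ) from rfl, show cubeB 0 1 = (0:ℝ) from rfl, show cubeB 0 2 = (0:ℝ) from rfl, show cubeB 0 3 = (0:ℝ) from rfl, show cubeB 0 4 = (1:ℝ) from rfl, show cubeB 0 5 = (0:ℝ) from rfl] at h0
  have h1 := h 1
  rw [key] at h1
  norm_num [show cubeB 1 0 = (1:ℝ) from rfl, show cubeB 1 1 = (0:ℝ) from rfl, show cubeB 1 2 = (1:ℝ) from rfl, show cubeB 1 3 = (0:ℝ) from rfl, show cubeB 1 4 = (1:ℝ) from rfl, show cubeB 1 5 = (0:ℝ) from rfl] at h1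
  have h2 := h 2
  rw [key] at h2
  norm_num [show cubeB 2 0 = (0:ℝ) from rfl, show cubeB 2 1 = (0:ℝ) from rfl, show cubeB 2 2 = (1:ℝ) from rfl, show cubeB 2 3 = (0:ℝ) from rfl, show cubeB 2 4 = (1:ℝ) from rfl, show cubeB 2 5 = (0:ℝ) from rfl] at h2
  have h3 := h 3
  rw [key] at h3
  norm_num [show cubeB 3 0 = (0:ℝ) from rfl, show cubeB 3 1 = (0:ℝ) from rfl, show cubeB 3 2 = (0:ℝ) from rfl, show cubeB 3 3 = (0:ℝ) from rfl, show cubeB 3 4 = (1:ℝ) from rfl, show cubeB 3 5 = (0:ℝ) from rfl] at h3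
  have h4 := h 4
  rw [key] at h4
  norm_num [show cubeB 4 0 = (0:ℝ) from rfl, show cubeB 4 1 = (0:ℝ) from rfl, show cubeB 4 2 = (1:ℝ) from rfl, show cubeB 4 3 = (0:ℝ) from rfl, show cubeB 4 4 = (-1:ℝ) from rfl, show cubeB 4 5 = (0:ℝ) from rfl] at h4
  have h5 := h 5
  rw [key] at h5
  norm_num [show cubeB 5 0 = (0:ℝ) from rfl, show cubeB 5 1 = (0:ℝ) from rfl, show cubeB 5 2 = (0:ℝ) from rfl, show cubeB 5 3 = (0:ℝ) from rfl, show cubeB 5 4 = (-1:ℝ) from rfl, show cubeB 5 5 = (0:ℝ) from rfl] at h5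
  have h6 := h 6
  rw [key] at h6
  norm_num [show cubeB 6 0 = (1:ℝ) from rfl, show cubeB 6 1 = (0:ℝ) from rfl, show cubeB 6 2 = (0:ℝ) from rfl, show cubeB 6 3 = (0:ℝ) from rfl, show cubeB 6 4 = (-1:ℝ) from rfl, show cubeB 6 5 = (0:ℝ) from rfl] at h6
  have h7 := h 7
  rw [key] at h7
  norm_num [show cubeB 7 0 = (1:ℝ) from rfl, show cubeB 7 1 = (0:ℝ) from rfl, show cubeB 7 2 = (1:ℝ) from rfl, show cubeB 7 3 = (0:ℝ) from rfl, show cubeB 7 4 = (-1:ℝ) from rfl, show cubeB 7 5 = (0:ℝ) from rfl] at h7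
  have h8 := h 8
  rw [key] at h8
  norm_num [show cubeB 8 0 = (0:ℝ) from rfl, show cubeB 8 1 = (-1:ℝ) from rfl, show cubeB 8 2 = (-1:ℝ) from rfl, show cubeB 8 3 = (1:ℝ) from rfl, show cubeB 8 4 = (0:ℝ) from rfl, show cubeB 8 5 = (0:ℝ) from rfl] at h8
  have h9 := h 9
  rw [key] at h9
  norm_num [show cubeB 9 0 = (0:ℝ) from rfl, show cubeB 9 1 = (-1:ℝ) from rfl, show cubeB 9 2 = (0:ℝ) from rfl, show cubeB 9 3 = (1:ℝ) from rfl, show cubeB 9 4 = (0:ℝ) from rfl, show cubeB 9 5 = (0:ℝ) from rfl] at h9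
  have h10 := h 10
  rw [key] at h10
  norm_num [show cubeB 10 0 = (0:ℝ) from rfl, show cubeB 10 1 = (0:ℝ) from rfl, show cubeB 10 2 = (0:ℝ) from rfl, show cubeB 10 3 = (1:ℝ) from rfl, show cubeB 10 4 = (0:ℝ) from rfl, show cubeB 10 5 = (0:ℝ) from rfl] at h10
  have h11 := h 11
  rw [key] at h11
  norm_num [show cubeB 11 0 = (0:ℝ) from rfl, show cubeB 11 1 = (0:ℝ) from rfl, show cubeB 11 2 = (-1:ℝ) from rfl, show cubeB 11 3 = (1:ℝ) from rfl, show cubeB 11 4 = (0:ℝ) from rfl, show cubeB 11 5 = (0:ℝ) from rfl] at h11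
  have h12 := h 12
  rw [key] at h12
  norm_num [show cubeB 12 0 = (0:ℝ) from rfl, show cubeB 12 1 = (0:ℝ) from rfl, show cubeB 12 2 = (0:ℝ) from rfl, show cubeB 12 3 = (-1:ℝ) from rfl, show cubeB 12 4 = (0:ℝ) from rfl, show cubeB 12 5 = (0:ℝ) from rfl] at h12
  have h13 := h 13
  rw [key] at h13
  norm_num [show cubeB 13 0 = (0:ℝ) from rfl, show cubeB 13 1 = (0:ℝ) from rfl, show cubeB 13 2 = (-1:ℝ) from rfl, show cubeB 13 3 = (-1:ℝ) from rfl, show cubeB 13 4 = (0:ℝ) from rfl, show cubeB 13 5 = (0:ℝ) from rfl] at h13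
  have h14 := h 14
  rw [key] at h14
  norm_num [show cubeB 14 0 = (0:ℝ) from rfl, show cubeB 14 1 = (-1:ℝ) from rfl, show cubeB 14 2 = (-1:ℝ) from rfl, show cubeB 14 3 = (-1:ℝ) from rfl, show cubeB 14 4 = (0:ℝ) from rfl, show cubeB 14 5 = (0:ℝ) from rfl] at h14
  have h15 := h 15
  rw [key] at h15
  norm_num [show cubeB 15 0 = (0:ℝ) from rfl, show cubeB 15 1 = (-1:ℝ) from rfl, show cubeB 15 2 = (0:ℝ) from rfl, show cubeB 15 3 = (-1:ℝ) from rfl, show cubeB 15 4 = (0:ℝ) from rfl, show cubeB 15 5 = (0:ℝ) from rfl] at h15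
  have h16 := h 16
  rw [key] at h16
  norm_num [show cubeB 16 0 = (0:ℝ) from rfl, show cubeB 16 1 = (1:ℝ) from rfl, show cubeB 16 2 = (0:ℝ) from rfl, show cubeB 16 3 = (0:ℝ) from rfl, show cubeB 16 4 = (0:ℝ) from rfl, show cubeB 16 5 = (1:ℝ) from rfl] at h16
  have h17 := h 17
  rw [key] at h17
  norm_num [show cubeB 17 0 = (0:ℝ) from rfl, show cubeB 17 1 = (0:ℝ) from rfl, show cubeB 17 2 = (0:ℝ) from rfl, show cubeB 17 3 = (0:ℝ) from rfl, show cubeB 17 4 = (0:ℝ) from rfl, show cubeB 17 5 = (1:ℝ) from rfl] at h17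
  have h18 := h 18
  rw [key] at h18
  norm_num [show cubeB 18 0 = (-1:ℝ) from rfl, show cubeB 18 1 = (0:ℝ) from rfl, show cubeB 18 2 = (0:ℝ) from rfl, show cubeB 18 3 = (0:ℝ) from rfl, show cubeB 18 4 = (0:ℝ) from rfl, show cubeB 18 5 = (1:ℝ) from rfl] at h18
  have h19 := h 19
  rw [key] at h19
  norm_num [show cubeB 19 0 = (-1:ℝ) from rfl, show cubeB 19 1 = (1:ℝ) from rfl, show cubeB 19 2 = (0:ℝ) from rfl, show cubeB 19 3 = (0:ℝ) from rfl, show cubeB 19 4 = (0:ℝ) from rfl, show cubeB 19 5 = (1:ℝ) from rfl] at h19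
  have h20 := h 20
  rw [key] at h20
  norm_num [show cubeB 20 0 = (-1:ℝ) from rfl, show cubeB 20 1 = (0:ℝ) from rfl, show cubeB 20 2 = (0:ℝ) from rfl, show cubeB 20 3 = (0:ℝ) from rfl, show cubeB 20 4 = (0:ℝ) from rfl, show cubeB 20 5 = (-1:ℝ) from rfl] at h20
  have h21 := h 21
  rw [key] at h21
  norm_num [show cubeB 21 0 = (-1:ℝ) from rfl, show cubeB 21 1 = (1:ℝ) from rfl, show cubeB 21 2 = (0:ℝ) from rfl, show cubeB 21 3 = (0:ℝ) from rfl, show cubeB 21 4 = (0:ℝ) from rfl, show cubeB 21 5 = (-1:ℝ) from rfl] at h21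
  have h22 := h 22
  rw [key] at h22
  norm_num [show cubeB 22 0 = (0:ℝ) from rfl, show cubeB 22 1 = (1:ℝ) from rfl, show cubeB 22 2 = (0:ℝ) from rfl, show cubeB 22 3 = (0:ℝ) from rfl, show cubeB 22 4 = (0:ℝ) from rfl, show cubeB 22 5 = (-1:ℝ) from rfl] at h22
  have h23 := h 23
  rw [key] at h23
  norm_num [show cubeB 23 0 = (0:ℝ) from rfl, show cubeB 23 1 = (0:ℝ) from rfl, show cubeB 23 2 = (0:ℝ) from rfl, show cubeB 23 3 = (0:ℝ) from rfl, show cubeB 23 4 = (0:ℝ) from rfl, show cubeB 23 5 = (-1:ℝ) from rfl] at h23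
  funext j
  fin_cases j <;> simp <;> linarith
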